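/- arXiv:2008.12600 — 3 statements merged into one kernel-verified Lean document; each statement's English description precedes it below -/
import Mathlib

section
/- For every x ∈ (0,1), the sum of SL(2,ℝ) blocks over even spins ℓ ≥ 2 weighted by the inverse conformal spin evaluates in closed form: ∑_{ℓ = 2,4,6,…} (Γ(ℓ+1)²/Γ(2ℓ+1)) · (2/(ℓ(ℓ+1))) · k_{ℓ+1}(x) = (1/2)·log²(1−x) + 2·Li₂(x) + 2·log(1−x). -/
open Real

/-- Pochhammer symbol `(a)_n = a (a+1) ⋯ (a+n-1)`. -/
noncomputable def poch (a : ℝ) (n : ℕ) : ℝ := (ascPochhammer ℝ n).eval a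

/-- Gauss hypergeometric series `₂F₁(a,b;c;x)`. -/
noncomputable def F21 (a b c x : ℝ) : ℝ :=
  ∑' n : ℕ, poch a n * poch b n / (poch c n * (n.factorial : ℝ)) * x ^ n

/-- The SL(2,ℝ) collinear conformal block `k_β(x) = x^β ₂F₁(β,β;2β;x)`. -/
noncomputable def kblock (β x : ℝ) : ℝ := x ^ β * F21 β β (2 * β) x

/-- The dilogarithm `Li₂(x) = ∑_{n≥1} xⁿ/n²`. -/
noncomputable def Li2 (x : ℝ) : ℝ := ∑' n : ℕ, x ^ (n + 1) / ((n : ℝ) + 1) ^ 2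

/-!
For natural `ℓ`, the normalized block `ℓ!² / (2ℓ+1)! · k_{ℓ+1}(x)` is the power series
`∑_M c(M, ℓ) x^(M+1)` with `c(M, ℓ) = M!² / ((M-ℓ)! (M+ℓ+1)!)`, which vanishes for `M < ℓ`.
All terms are nonnegative, so the sum over spins may be taken coefficientwise. With
`w(ℓ) = 2/ℓ + 2/(ℓ+1)`, the coefficients satisfy the WZ-type relation
`w(ℓ) ((M+2) c(M+1, ℓ) - (M+1) c(M, ℓ)) = c(M, ℓ-1) - c(M, ℓ+1)`, which telescopes over even `ℓ`;
by induction on `M` this gives `(M+1) ∑_{ℓ even} w(ℓ) c(M, ℓ) = H_M + 2/(M+1) - 2`. These are the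
Taylor coefficients of `½ log²(1-x) + 2 Li₂(x) + 2 log(1-x)`, the square of
`-log(1-x) = ∑ xⁿ⁺¹/(n+1)` being computed as a Cauchy product.
-/

open Finset
open scoped Nat

theorem hasSum_of_nonneg_of_hasSum_rows_of_hasSum_cols {β γ : Type*} {f : β → γ → ℝ}
    {a : β → ℝ} {b : γ → ℝ} {s : ℝ} (hf : ∀ i j, 0 ≤ f i j)
    (ha : ∀ i, HasSum (f i) (a i)) (hb : ∀ j, HasSum (fun i ↦ f i j) (b j))
    (hs : HasSum b s) : HasSum a s := by
  set g : γ × β → ℝ := fun p ↦ f p.2 p.1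
  have hg : Summable g := by
    refine (summable_prod_of_nonneg fun p ↦ hf p.2 p.1).2 ⟨fun j ↦ (hb j).summable, ?_⟩
    simpa only [g, (hb _).tsum_eq] using hs.summable
  have hgs : HasSum g s := hs.unique (hg.hasSum.prod_fiberwise hb) ▸ hg.hasSum
  have hfs : HasSum (Function.uncurry f) s :=
    (Equiv.prodComm β γ).symm.hasSum_iff.1 hgs
  exact hfs.prod_fiberwise ha

-- `M.descFactorial ℓ * M !` is `M !² / (M - ℓ)!` for `ℓ ≤ M` and `0` for `M < ℓ`.
noncomputable def blockCoeff (M ℓ : ℕ) : ℝ := M.descFactorial ℓ * M ! / (M + ℓ + 1)!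

lemma blockCoeff_nonneg (M ℓ : ℕ) : 0 ≤ blockCoeff M ℓ := by
  unfold blockCoeff; positivity

lemma blockCoeff_eq_zero_of_lt {M ℓ : ℕ} (h : M < ℓ) : blockCoeff M ℓ = 0 := by
  simp [blockCoeff, Nat.descFactorial_eq_zero_iff_lt.2 h]

lemma blockCoeff_le_one (M ℓ : ℕ) : blockCoeff M ℓ ≤ 1 := by
  unfold blockCoeff
  rw [div_le_one (by positivity)]
  have hdesc : M.descFactorial ℓ ≤ (M + ℓ + 1).descFactorial (ℓ + 1) :=
    calc M.descFactorial ℓ ≤ (M + ℓ).descFactorial ℓ := Nat.descFactorial_le _ (by omega)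
      _ ≤ (M + ℓ + 1) * (M + ℓ).descFactorial ℓ := Nat.le_mul_of_pos_left _ (by omega)
      _ = (M + ℓ + 1).descFactorial (ℓ + 1) := (Nat.succ_descFactorial_succ _ _).symm
  have hfact : (M + ℓ + 1).descFactorial (ℓ + 1) * M ! = (M + ℓ + 1)! := by
    rw [mul_comm, ← Nat.factorial_mul_descFactorial (show ℓ + 1 ≤ M + ℓ + 1 by omega),
      show M + ℓ + 1 - (ℓ + 1) = M by omega]
  exact_mod_cast hfact ▸ Nat.mul_le_mul_right _ hdesc

lemma blockCoeff_one (M : ℕ) : blockCoeff M 1 = M / ((M + 1) * (M + 2)) := by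
  rw [blockCoeff, Nat.descFactorial_one, show M + 1 + 1 = M + 2 by ring, Nat.factorial_succ,
    Nat.factorial_succ]
  push_cast
  field_simp
  ring

lemma cast_descFactorial_succ (M k : ℕ) :
    (M.descFactorial (k + 1) : ℝ) = M.descFactorial k * ((M : ℝ) - k) := by
  simp only [← descPochhammer_eval_eq_descFactorial, descPochhammer_succ_eval]

noncomputable def spinWeight (ℓ : ℕ) : ℝ := 2 / ℓ + 2 / (ℓ + 1)

lemma spinWeight_mul_sub_blockCoeff (M k : ℕ) :
    spinWeight (k + 1) * ((M + 2) * blockCoeff (M + 1) (k + 1) - (M + 1) * blockCoeff M (k + 1))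
      = blockCoeff M k - blockCoeff M (k + 2) := by
  simp only [spinWeight, blockCoeff, cast_descFactorial_succ, Nat.succ_descFactorial_succ,
    show M + 1 + (k + 1) + 1 = M + k + 1 + 1 + 1 by ring,
    show M + (k + 2) + 1 = M + k + 1 + 1 + 1 by ring,
    show M + (k + 1) + 1 = M + k + 1 + 1 by ring, Nat.factorial_succ (M + k + 1 + 1),
    Nat.factorial_succ (M + k + 1), Nat.factorial_succ M]
  push_cast
  field_simp
  ring

lemma succ_mul_sum_spinWeight_mul_blockCoeff {M R : ℕ} (hR : M ≤ 2 * R) :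
    ((M : ℝ) + 1) * ∑ n ∈ range R, spinWeight (2 * n + 2) * blockCoeff M (2 * n + 2)
      = harmonic M + 2 / ((M : ℝ) + 1) - 2 := by
  induction M with
  | zero => simp [blockCoeff_eq_zero_of_lt]
  | succ M ih =>
    have htele : ∑ n ∈ range R, (blockCoeff M (2 * n + 1) - blockCoeff M (2 * n + 3))
        = blockCoeff M 1 - blockCoeff M (2 * R + 1) :=
      sum_range_sub' (fun n ↦ blockCoeff M (2 * n + 1)) R
    calc ((↑(M + 1) : ℝ) + 1) * ∑ n ∈ range R,
          spinWeight (2 * n + 2) * blockCoeff (M + 1) (2 * n + 2)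
        = ((M : ℝ) + 1) * ∑ n ∈ range R, spinWeight (2 * n + 2) * blockCoeff M (2 * n + 2)
          + ∑ n ∈ range R, (blockCoeff M (2 * n + 1) - blockCoeff M (2 * n + 3)) := by
          rw [mul_sum, mul_sum, ← sum_add_distrib]
          refine sum_congr rfl fun n _ ↦ ?_
          have := spinWeight_mul_sub_blockCoeff M (2 * n + 1)
          push_cast
          linear_combination this
      _ = harmonic M + 2 / ((M : ℝ) + 1) - 2 + M / ((M + 1) * (M + 2)) := by
          rw [ih (by omega), htele, blockCoeff_one, blockCoeff_eq_zero_of_lt (by omega), sub_zero]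
      _ = harmonic (M + 1) + 2 / ((↑(M + 1) : ℝ) + 1) - 2 := by
          rw [harmonic_succ]
          push_cast
          field_simp
          ring

lemma hasSum_spinWeight_mul_blockCoeff (M : ℕ) :
    HasSum (fun n ↦ spinWeight (2 * n + 2) * blockCoeff M (2 * n + 2))
      ((harmonic M + 2 / ((M : ℝ) + 1) - 2) / ((M : ℝ) + 1)) := by
  rw [← succ_mul_sum_spinWeight_mul_blockCoeff (R := M) (by omega),
    mul_div_cancel_left₀ _ (by positivity)]
  refine hasSum_sum_of_ne_finset_zero fun n hn ↦ ?_
  rw [blockCoeff_eq_zero_of_lt (by simp at hn; omega), mul_zero]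

lemma poch_natCast (k m : ℕ) : poch k m = k.ascFactorial m :=
  (Nat.cast_ascFactorial ℝ k m).symm

lemma factorial_sq_div_mul_poch_eq_blockCoeff (ℓ m : ℕ) :
    (ℓ ! : ℝ) ^ 2 / (2 * ℓ + 1)! * (poch (ℓ + 1) m * poch (ℓ + 1) m
      / (poch (2 * (ℓ + 1)) m * m !)) = blockCoeff (ℓ + m) ℓ := by
  have hℓ : (ℓ ! : ℝ) * (ℓ + 1).ascFactorial m = (ℓ + m)! := by
    exact_mod_cast Nat.factorial_mul_ascFactorial ℓ m
  have h2ℓ : ((2 * ℓ + 1)! : ℝ) * (2 * ℓ + 1 + 1).ascFactorial m = (2 * ℓ + 1 + m)! := by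
    exact_mod_cast Nat.factorial_mul_ascFactorial (2 * ℓ + 1) m
  have hm : (m ! : ℝ) * (ℓ + m).descFactorial ℓ = (ℓ + m)! := by
    exact_mod_cast (by simpa using Nat.factorial_mul_descFactorial (Nat.le_add_right ℓ m))
  rw [show ((ℓ : ℝ) + 1) = ((ℓ + 1 : ℕ) : ℝ) by push_cast; ring,
    show 2 * ((ℓ + 1 : ℕ) : ℝ) = ((2 * ℓ + 1 + 1 : ℕ) : ℝ) by push_cast; ring, poch_natCast,
    poch_natCast, blockCoeff, show ℓ + m + ℓ + 1 = 2 * ℓ + 1 + m by ring]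
  calc _ = ((ℓ ! : ℝ) * (ℓ + 1).ascFactorial m) ^ 2
        / (((2 * ℓ + 1)! : ℝ) * (2 * ℓ + 1 + 1).ascFactorial m * m !) := by ring
    _ = ((ℓ + m)! : ℝ) ^ 2 / ((2 * ℓ + 1 + m)! * m !) := by rw [hℓ, h2ℓ]
    _ = _ := by
      rw [← hm]
      field_simp

lemma summable_blockCoeff_mul_pow (ℓ : ℕ) {x : ℝ} (hx : |x| < 1) :
    Summable fun m ↦ blockCoeff (ℓ + m) ℓ * x ^ m := by
  refine .of_norm_bounded (summable_geometric_of_lt_one (abs_nonneg x) hx) fun m ↦ ?_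
  rw [norm_mul, Real.norm_of_nonneg (blockCoeff_nonneg _ _), norm_pow, Real.norm_eq_abs]
  exact mul_le_of_le_one_left (by positivity) (blockCoeff_le_one _ _)

lemma hasSum_blockCoeff_add_mul_pow (ℓ : ℕ) {x : ℝ} (hx : |x| < 1) :
    HasSum (fun m ↦ blockCoeff (ℓ + m) ℓ * x ^ m)
      ((ℓ ! : ℝ) ^ 2 / (2 * ℓ + 1)! * F21 (ℓ + 1) (ℓ + 1) (2 * (ℓ + 1)) x) := by
  have hK : (ℓ ! : ℝ) ^ 2 / (2 * ℓ + 1)! ≠ 0 := by positivity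
  have hF : Summable fun m ↦
      poch (ℓ + 1) m * poch (ℓ + 1) m / (poch (2 * (ℓ + 1)) m * m !) * x ^ m := by
    refine ((summable_blockCoeff_mul_pow ℓ hx).mul_left ((ℓ ! : ℝ) ^ 2 / (2 * ℓ + 1)!)⁻¹).congr
      fun m ↦ ?_
    rw [← factorial_sq_div_mul_poch_eq_blockCoeff, mul_assoc, inv_mul_cancel_left₀ hK]
  refine (hF.hasSum.mul_left ((ℓ ! : ℝ) ^ 2 / (2 * ℓ + 1)!)).congr_fun fun m ↦ ?_
  rw [← mul_assoc, factorial_sq_div_mul_poch_eq_blockCoeff]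

lemma hasSum_blockCoeff_mul_pow (ℓ : ℕ) {x : ℝ} (hx : |x| < 1) :
    HasSum (fun M ↦ blockCoeff M ℓ * x ^ (M + 1))
      ((ℓ ! : ℝ) ^ 2 / (2 * ℓ + 1)! * kblock (ℓ + 1) x) := by
  have hpow : x ^ ((ℓ : ℝ) + 1) = x ^ (ℓ + 1) := by exact_mod_cast Real.rpow_natCast x (ℓ + 1)
  refine (hasSum_nat_add_iff' ℓ).1 ?_
  rw [sum_eq_zero fun M hM ↦ by rw [blockCoeff_eq_zero_of_lt (mem_range.1 hM), zero_mul],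
    sub_zero, kblock, hpow, mul_left_comm]
  refine ((hasSum_blockCoeff_add_mul_pow ℓ hx).mul_left (x ^ (ℓ + 1))).congr_fun fun m ↦ ?_
  rw [add_comm m ℓ]
  ring

lemma sum_antidiagonal_one_div_succ_mul_succ (k : ℕ) :
    ∑ p ∈ antidiagonal k, 1 / (((p.1 : ℝ) + 1) * ((p.2 : ℝ) + 1))
      = 2 * harmonic (k + 1) / ((k : ℝ) + 2) := by
  have hsplit : ∀ p ∈ antidiagonal k, 1 / (((p.1 : ℝ) + 1) * ((p.2 : ℝ) + 1))
      = (1 / ((p.1 : ℝ) + 1) + 1 / ((p.swap.1 : ℝ) + 1)) / ((k : ℝ) + 2) := by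
    intro p hp
    have hk : (p.1 : ℝ) + p.2 = k := by exact_mod_cast mem_antidiagonal.1 hp
    rw [Prod.fst_swap, ← hk]
    field_simp
    ring
  have hH : ∑ p ∈ antidiagonal k, 1 / ((p.1 : ℝ) + 1) = harmonic (k + 1) := by
    rw [Finset.Nat.sum_antidiagonal_eq_sum_range_succ_mk, harmonic]
    push_cast
    simp only [one_div]
  rw [sum_congr rfl hsplit, ← sum_div, sum_add_distrib,
    Finset.Nat.sum_antidiagonal_swap (f := fun p ↦ 1 / ((p.1 : ℝ) + 1)), hH]
  ring

lemma hasSum_harmonic_div_mul_pow {x : ℝ} (hx : |x| < 1) :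
    HasSum (fun M ↦ harmonic M / ((M : ℝ) + 1) * x ^ (M + 1)) (Real.log (1 - x) ^ 2 / 2) := by
  set a : ℕ → ℝ := fun n ↦ x ^ (n + 1) / (n + 1)
  have ha : HasSum a (-Real.log (1 - x)) := Real.hasSum_pow_div_log_of_abs_lt_one hx
  have hnorm : Summable fun n ↦ ‖a n‖ := by
    refine (Real.hasSum_pow_div_log_of_abs_lt_one ((abs_abs x).symm ▸ hx)).summable.congr
      fun n ↦ ?_
    simp [a, abs_of_nonneg (by positivity : (0 : ℝ) ≤ n + 1)]
  have hcauchy : HasSum (fun k ↦ ∑ p ∈ antidiagonal k, a p.1 * a p.2)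
      (Real.log (1 - x) ^ 2) := by
    rw [sq, ← neg_mul_neg, ← ha.tsum_eq,
      tsum_mul_tsum_eq_tsum_sum_antidiagonal_of_summable_norm hnorm hnorm]
    exact (summable_norm_sum_mul_antidiagonal_of_summable_norm hnorm hnorm).of_norm.hasSum
  have hdiag (k : ℕ) : ∑ p ∈ antidiagonal k, a p.1 * a p.2
      = 2 * (harmonic (k + 1) / ((↑(k + 1) : ℝ) + 1) * x ^ (k + 1 + 1)) := by
    have hterm : ∀ p ∈ antidiagonal k,
        a p.1 * a p.2 = x ^ (k + 2) * (1 / (((p.1 : ℝ) + 1) * ((p.2 : ℝ) + 1))) := by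
      intro p hp
      rw [← mem_antidiagonal.1 hp]
      simp only [a]
      field_simp
      ring
    rw [sum_congr rfl hterm, ← mul_sum, sum_antidiagonal_one_div_succ_mul_succ]
    push_cast
    ring
  refine (hasSum_nat_add_iff' 1).1 ?_
  simpa [hdiag, mul_div_assoc] using hcauchy.div_const 2

lemma hasSum_Li2 {x : ℝ} (hx : |x| < 1) :
    HasSum (fun n : ℕ ↦ x ^ (n + 1) / ((n : ℝ) + 1) ^ 2) (Li2 x) := by
  refine Summable.hasSum (.of_norm_bounded (summable_geometric_of_lt_one (abs_nonneg x) hx)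
    fun n ↦ ?_)
  rw [norm_div, norm_pow, Real.norm_eq_abs, Real.norm_of_nonneg (by positivity)]
  calc |x| ^ (n + 1) / ((n : ℝ) + 1) ^ 2 ≤ |x| ^ (n + 1) :=
        div_le_self (by positivity) (one_le_pow₀ (by linarith [n.cast_nonneg (α := ℝ)]))
    _ ≤ |x| ^ n := pow_le_pow_of_le_one (abs_nonneg x) hx.le (by omega)

lemma hasSum_log_sq_add_Li2_add_log {x : ℝ} (hx : |x| < 1) :
    HasSum (fun M ↦ (harmonic M + 2 / ((M : ℝ) + 1) - 2) / ((M : ℝ) + 1) * x ^ (M + 1))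
      (1 / 2 * Real.log (1 - x) ^ 2 + 2 * Li2 x + 2 * Real.log (1 - x)) := by
  convert ((hasSum_harmonic_div_mul_pow hx).add ((hasSum_Li2 hx).mul_left 2)).add
    ((Real.hasSum_pow_div_log_of_abs_lt_one hx).mul_left (-2)) using 1
  · ext M
    field_simp
    ring
  · ring

lemma Gamma_sq_div_Gamma_mul_two_div (ℓ : ℕ) (hℓ : ℓ ≠ 0) :
    Real.Gamma (ℓ + 1) ^ 2 / Real.Gamma (2 * ℓ + 1) * (2 / (ℓ * (ℓ + 1)))
      = spinWeight ℓ * ((ℓ ! : ℝ) ^ 2 / (2 * ℓ + 1)!) := by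
  rw [Real.Gamma_nat_eq_factorial, show (2 * ℓ : ℝ) = ((2 * ℓ : ℕ) : ℝ) by push_cast; ring,
    Real.Gamma_nat_eq_factorial, Nat.factorial_succ (2 * ℓ), spinWeight]
  push_cast
  field_simp
  ring

/-- for x ∈ (0,1), summing SL(2,ℝ) blocks over even spins
ℓ = 2,4,6,… (here ℓ = 2(n+1)) weighted by the inverse conformal spin gives
`∑ (Γ(ℓ+1)²/Γ(2ℓ+1))·(2/(ℓ(ℓ+1)))·k_{ℓ+1}(x)
  = ½ log²(1−x) + 2 Li₂(x) + 2 log(1−x)`. -/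
theorem sum_blocks_inverse_conformal_spin (x : ℝ) (hx : x ∈ Set.Ioo (0 : ℝ) 1) :
    ∑' n : ℕ,
        (Real.Gamma ((2 * (n : ℝ) + 2) + 1)) ^ 2 / Real.Gamma (2 * (2 * (n : ℝ) + 2) + 1)
          * (2 / ((2 * (n : ℝ) + 2) * ((2 * (n : ℝ) + 2) + 1)))
          * kblock ((2 * (n : ℝ) + 2) + 1) x
      = 1 / 2 * (Real.log (1 - x)) ^ 2 + 2 * Li2 x + 2 * Real.log (1 - x) := by
  obtain ⟨hx0, hx1⟩ := hx
  have habs : |x| < 1 := abs_lt.2 ⟨by linarith, hx1⟩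
  refine (hasSum_of_nonneg_of_hasSum_rows_of_hasSum_cols
    (f := fun n M ↦ spinWeight (2 * n + 2) * blockCoeff M (2 * n + 2) * x ^ (M + 1))
    (fun n M ↦ ?_) (fun n ↦ ?_) (fun M ↦ (hasSum_spinWeight_mul_blockCoeff M).mul_right _)
    (hasSum_log_sq_add_Li2_add_log habs)).tsum_eq
  · exact mul_nonneg (mul_nonneg (by unfold spinWeight; positivity) (blockCoeff_nonneg _ _))
      (pow_nonneg hx0.le _)
  · have hrow := (hasSum_blockCoeff_mul_pow (2 * n + 2) habs).mul_left (spinWeight (2 * n + 2))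
    rw [← mul_assoc, ← Gamma_sq_div_Gamma_mul_two_div _ (by omega)] at hrow
    push_cast at hrow
    simpa only [mul_assoc] using hrow
end

section
/- For every real h̄ > 1, the inversion integral of a constant double-discontinuity evaluates in closed form: ∫₀¹ x^{h̄−2} · ₂F₁(h̄,h̄;2h̄;x) dx = Γ(2h̄) / (Γ(h̄)² · h̄(h̄−1)). -/
open Real

/-!
Expanding `₂F₁` and integrating termwise (the coefficients are nonnegative) turns the integral
into `∑ (h)ₙ² / ((2h)ₙ n! (h - 1 + n)) = (h - 1)⁻¹ ∑ (h - 1)ₙ (h)ₙ / ((2h)ₙ n!)`, that is,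
`₂F₁(h - 1, h; 2h; 1) / (h - 1)`. Gauss's sum
`₂F₁(a, b; a + b + 1; 1) = Γ(a + b + 1) / (Γ(a + 1) Γ(b + 1))` holds because its partial sums
telescope to `(a + 1)ₙ (b + 1)ₙ / ((a + b + 1)ₙ n!)`, whose limit is read off from Euler's limit
formula `Γ(s) = lim nˢ n! / (s)ₙ₊₁`.
-/

open Filter Finset MeasureTheory Topology
open scoped Nat

lemma poch_succ_right (a : ℝ) (n : ℕ) : poch a (n + 1) = poch a n * (a + n) :=
  ascPochhammer_succ_eval n a

lemma poch_succ_left (a : ℝ) (n : ℕ) : poch a (n + 1) = a * poch (a + 1) n := by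
  simp [poch, ascPochhammer_succ_left, Polynomial.eval_comp]

lemma poch_eq_prod_range (a : ℝ) (n : ℕ) : poch a n = ∏ j ∈ range n, (a + j) := by
  induction n with
  | zero => simp [poch]
  | succ n ih => rw [poch_succ_right, ih, prod_range_succ]

lemma poch_pos {a : ℝ} (ha : 0 < a) (n : ℕ) : 0 < poch a n :=
  ascPochhammer_pos n a ha

lemma poch_nonneg {a : ℝ} (ha : 0 ≤ a) (n : ℕ) : 0 ≤ poch a n := by
  rw [poch_eq_prod_range]
  exact prod_nonneg fun j _ => by positivity

lemma poch_add_one_div {a : ℝ} (ha : a ≠ 0) {n : ℕ} (han : a + n ≠ 0) :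
    poch (a + 1) n / (a + n) = poch a n / a := by
  rw [div_eq_div_iff han ha, mul_comm, ← poch_succ_left, poch_succ_right]

lemma GammaSeq_eq_poch (s : ℝ) (n : ℕ) : GammaSeq s n = (n : ℝ) ^ s * n ! / poch s (n + 1) := by
  rw [GammaSeq, poch_eq_prod_range]

lemma sum_range_poch_mul_poch_div {a b : ℝ} (hab : 0 < a + b + 1) (n : ℕ) :
    ∑ k ∈ range (n + 1), poch a k * poch b k / (poch (a + b + 1) k * k !) =
      poch (a + 1) n * poch (b + 1) n / (poch (a + b + 1) n * n !) := by
  induction n with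
  | zero => simp [poch]
  | succ n ih =>
    have := poch_pos hab n
    rw [sum_range_succ, ih, poch_succ_left, poch_succ_left b, poch_succ_right (a + 1),
      poch_succ_right (b + 1), poch_succ_right (a + b + 1), Nat.factorial_succ]
    push_cast
    field_simp
    ring

lemma tendsto_poch_mul_poch_div {a b : ℝ} (ha : -1 < a) (hb : -1 < b) (hab : 0 < a + b + 1) :
    Tendsto (fun n => poch (a + 1) n * poch (b + 1) n / (poch (a + b + 1) n * n !)) atTop
      (𝓝 (Gamma (a + b + 1) / (Gamma (a + 1) * Gamma (b + 1)))) := by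
  have ha1 : 0 < a + 1 := by linarith
  have hb1 : 0 < b + 1 := by linarith
  have hGamma : Gamma (a + 1) * Gamma (b + 1) ≠ 0 :=
    (mul_pos (Gamma_pos_of_pos ha1) (Gamma_pos_of_pos hb1)).ne'
  have hlim := (tendsto_natCast_div_add_atTop (1 : ℝ)).mul ((GammaSeq_tendsto_Gamma (a + b + 1)).div
    ((GammaSeq_tendsto_Gamma (a + 1)).mul (GammaSeq_tendsto_Gamma (b + 1))) hGamma)
  rw [one_mul] at hlim
  refine (tendsto_add_atTop_iff_nat 1).mp (hlim.congr' ?_)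
  filter_upwards [eventually_ge_atTop 1] with n hn
  have hn0 : (0 : ℝ) < n := by exact_mod_cast hn
  have hpow : (n : ℝ) ^ (a + 1) * (n : ℝ) ^ (b + 1) = (n : ℝ) ^ (a + b + 1) * n := by
    rw [← rpow_add hn0, ← rpow_add_one hn0.ne']
    ring_nf
  have := poch_pos ha1 (n + 1)
  have := poch_pos hb1 (n + 1)
  have := poch_pos hab (n + 1)
  have := rpow_pos_of_pos hn0 (a + 1)
  have := rpow_pos_of_pos hn0 (b + 1)
  have := rpow_pos_of_pos hn0 (a + b + 1)
  simp only [Pi.div_apply, GammaSeq_eq_poch, Nat.factorial_succ]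
  push_cast
  field_simp
  linear_combination -hpow

theorem hasSum_poch_mul_poch_div {a b : ℝ} (ha : 0 ≤ a) (hb : 0 ≤ b) :
    HasSum (fun k => poch a k * poch b k / (poch (a + b + 1) k * k !))
      (Gamma (a + b + 1) / (Gamma (a + 1) * Gamma (b + 1))) := by
  have hab : 0 < a + b + 1 := by positivity
  have hterm : ∀ k, 0 ≤ poch a k * poch b k / (poch (a + b + 1) k * k !) := fun k => by
    have := poch_nonneg ha k
    have := poch_nonneg hb k
    have := poch_pos hab k
    positivity
  rw [hasSum_iff_tendsto_nat_of_nonneg hterm]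
  refine (tendsto_add_atTop_iff_nat 1).mp ?_
  simp only [sum_range_poch_mul_poch_div hab]
  exact tendsto_poch_mul_poch_div (by linarith) (by linarith) hab

lemma integral_rpow_zero_one {r : ℝ} (hr : -1 < r) : ∫ x in (0 : ℝ)..1, x ^ r = 1 / (r + 1) := by
  rw [integral_rpow (Or.inl hr), one_rpow, zero_rpow (by linarith), sub_zero]

theorem integral_rpow_mul_tsum {s : ℝ} (hs : -1 < s) {c : ℕ → ℝ}
    (hc : Summable fun n => |c n| / (s + n + 1)) :
    ∫ x in (0 : ℝ)..1, x ^ s * ∑' n, c n * x ^ n = ∑' n, c n / (s + n + 1) := by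
  have hsn : ∀ n : ℕ, -1 < s + n := fun n => by have := n.cast_nonneg (α := ℝ); linarith
  have hint : ∀ n : ℕ, IntegrableOn (fun x => c n * x ^ (s + n)) (Set.Ioc 0 1) := fun n =>
    ((intervalIntegrable_iff_integrableOn_Ioc_of_le zero_le_one).mp
      (intervalIntegral.intervalIntegrable_rpow' (hsn n))).const_mul (c n)
  have hterm : ∀ (d : ℝ) (n : ℕ), ∫ x in Set.Ioc 0 1, d * x ^ (s + n) = d / (s + n + 1) := by
    intro d n
    rw [integral_const_mul, ← intervalIntegral.integral_of_le zero_le_one,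
      integral_rpow_zero_one (hsn n), mul_one_div]
  have hnorm : ∀ n : ℕ, ∫ x in Set.Ioc 0 1, ‖c n * x ^ (s + n)‖ = |c n| / (s + n + 1) := fun n => by
    rw [← hterm]
    refine setIntegral_congr_fun measurableSet_Ioc fun x hx => ?_
    rw [norm_mul, Real.norm_eq_abs, Real.norm_of_nonneg (rpow_nonneg hx.1.le _)]
  have hseries : ∀ x ∈ Set.Ioc (0 : ℝ) 1, x ^ s * ∑' n, c n * x ^ n = ∑' n, c n * x ^ (s + n) := by
    intro x hx
    rw [← tsum_mul_left]
    exact tsum_congr fun n => by rw [rpow_add hx.1, rpow_natCast]; ring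
  rw [intervalIntegral.integral_of_le zero_le_one, setIntegral_congr_fun measurableSet_Ioc hseries,
    ← integral_tsum_of_summable_integral_norm hint (by simpa only [hnorm] using hc)]
  exact tsum_congr fun n => hterm (c n) n

/-- for h̄ > 1, the inversion integral of a constant
double-discontinuity evaluates in closed form:
`∫₀¹ x^{h̄−2} ₂F₁(h̄,h̄;2h̄;x) dx = Γ(2h̄)/(Γ(h̄)²·h̄(h̄−1))`. -/
theorem inversion_integral_const (hb : ℝ) (hhb : 1 < hb) :
    (∫ x in (0 : ℝ)..1, x ^ (hb - 2) * F21 hb hb (2 * hb) x)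
      = Real.Gamma (2 * hb) / ((Real.Gamma hb) ^ 2 * (hb * (hb - 1))) := by
  set c : ℕ → ℝ := fun n => poch hb n * poch hb n / (poch (2 * hb) n * n !)
  have hgauss := hasSum_poch_mul_poch_div (a := hb - 1) (b := hb) (by linarith) (by linarith)
  rw [show hb - 1 + hb + 1 = 2 * hb by ring, sub_add_cancel] at hgauss
  have hcoeff : ∀ n : ℕ, c n / (hb - 2 + n + 1) =
      poch (hb - 1) n * poch hb n / (poch (2 * hb) n * n !) / (hb - 1) := fun n => by
    have hshift := poch_add_one_div (sub_ne_zero.mpr hhb.ne') (n := n) (by positivity)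
    rw [sub_add_cancel] at hshift
    calc c n / (hb - 2 + n + 1)
        = poch hb n / (hb - 1 + n) * (poch hb n / (poch (2 * hb) n * n !)) := by
          simp only [c]; ring
      _ = _ := by rw [hshift]; ring
  have hc : ∀ n, |c n| = c n := fun n => abs_of_nonneg (by
    have := poch_pos (by linarith : 0 < hb) n
    have := poch_pos (by linarith : 0 < 2 * hb) n
    positivity)
  unfold F21
  rw [integral_rpow_mul_tsum (by linarith)
      ((hgauss.summable.div_const (hb - 1)).congr fun n => by rw [hc, hcoeff]),
    tsum_congr hcoeff, tsum_div_const, hgauss.tsum_eq, Gamma_add_one (by positivity)]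
  field_simp
end

section
/- Quadratic Casimir equation for four-dimensional conformal blocks: define D_x f := (1−x)·x²·∂_x² f − x²·∂_x f and the d = 4 quadratic Casimir operator C₂ := D_z + D_z̄ + 2·(z z̄/(z − z̄))·((1−z)∂_z − (1−z̄)∂_z̄). Then for every real τ > 2, every nonnegative integer ℓ, and all z ≠ z̄ in (0,1), C₂ G_{τ,ℓ}(z,z̄) = (1/2)·(ℓ(ℓ+2) + Δ(Δ−4))·G_{τ,ℓ}(z,z̄), where Δ := τ + ℓ. -/
/-!
With `t_n = (a)_n (b)_n / ((c)_n n!)`, the recursion `(n + 1)(c + n) t_{n+1} = (a + n)(b + n) t_n`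
shows, coefficient by coefficient, that `₂F₁(a,b;c;x)` solves Euler's hypergeometric equation on
`|x| < 1`. Factoring out `x^β`, this says that `k_β` is an eigenfunction of `D_x` with
eigenvalue `β(β - 1)`. Conjugation by the prefactor `z z̄/(z - z̄)` turns `C₂` into
`D_z + D_z̄ - 2`, under which the antisymmetrised product `k_h(z) k_h̄(z̄) - k_h(z̄) k_h̄(z)` has eigenvalue
`h(h - 1) + h̄(h̄ - 1) - 2`; for `h = τ/2 + ℓ`, `h̄ = τ/2 - 1` this is `½(ℓ(ℓ + 2) + Δ(Δ - 4))`.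
-/

open Real

/-- The four-dimensional conformal block of twist τ and spin ℓ:
`G_{τ,ℓ}(z,z̄) = (z z̄/(z−z̄))·(k_{τ/2+ℓ}(z) k_{τ/2−1}(z̄) − k_{τ/2+ℓ}(z̄) k_{τ/2−1}(z))`. -/
noncomputable def G4block (τ : ℝ) (ℓ : ℕ) (z zb : ℝ) : ℝ :=
  z * zb / (z - zb) *
    (kblock (τ / 2 + (ℓ : ℝ)) z * kblock (τ / 2 - 1) zb
      - kblock (τ / 2 + (ℓ : ℝ)) zb * kblock (τ / 2 - 1) z)

/-- The one-variable operator `D_x f = (1−x)x² f''(x) − x² f'(x)`. -/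
noncomputable def Dop (f : ℝ → ℝ) (x : ℝ) : ℝ :=
  (1 - x) * x ^ 2 * deriv (deriv f) x - x ^ 2 * deriv f x

/-- The d = 4 quadratic Casimir operator
`C₂ = D_z + D_z̄ + 2 (z z̄/(z−z̄))·((1−z)∂_z − (1−z̄)∂_z̄)`. -/
noncomputable def Casimir2 (f : ℝ → ℝ → ℝ) (z zb : ℝ) : ℝ :=
  Dop (fun w => f w zb) z + Dop (fun w => f z w) zb
    + 2 * (z * zb / (z - zb)) *
        ((1 - z) * deriv (fun w => f w zb) z - (1 - zb) * deriv (fun w => f z w) zb)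

open Filter Topology Set FormalMultilinearSeries
open scoped NNReal ENNReal

theorem FormalMultilinearSeries.summable_pow_mul_norm_mul_pow {𝕜 E F : Type*}
    [NontriviallyNormedField 𝕜] [NormedAddCommGroup E] [NormedSpace 𝕜 E]
    [NormedAddCommGroup F] [NormedSpace 𝕜 F] (p : FormalMultilinearSeries 𝕜 E F)
    {r : ℝ≥0} (h : ↑r < p.radius) (k : ℕ) :
    Summable fun n : ℕ => (n : ℝ) ^ k * (‖p n‖ * (r : ℝ) ^ n) := by
  obtain ⟨q, hq, C, -, hp⟩ := p.norm_mul_pow_le_mul_pow_of_lt_radius h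
  refine .of_nonneg_of_le (fun _ => by positivity)
    (fun n => mul_le_mul_of_nonneg_left (hp n) (by positivity)) ?_
  simpa [mul_left_comm] using (summable_pow_mul_geometric_of_norm_lt_one k
    (by rw [Real.norm_of_nonneg hq.1.le]; exact hq.2 : ‖q‖ < 1)).mul_left C

def derivCoeff (a : ℕ → ℝ) (n : ℕ) : ℝ := (n + 1) * a (n + 1)

section PowerSeries

variable {a : ℕ → ℝ} {x : ℝ}

lemma summable_natCast_mul_norm_mul_pow_sub_one {r : ℝ≥0} (hr0 : 0 < r)
    (hr : ↑r < (ofScalars ℝ a).radius) :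
    Summable fun n : ℕ => n * ‖a n‖ * (r : ℝ) ^ (n - 1) := by
  refine (((ofScalars ℝ a).summable_pow_mul_norm_mul_pow hr 1).div_const r).congr fun n => ?_
  rcases n with _ | n
  · simp
  · simp only [Nat.cast_add, Nat.cast_one, pow_succ, pow_zero, one_mul, norm_apply_eq_norm_coef,
      coeff_ofScalars, Real.norm_eq_abs, add_tsub_cancel_right]
    field_simp

lemma radius_le_radius_derivCoeff :
    (ofScalars ℝ a).radius ≤ (ofScalars ℝ (derivCoeff a)).radius := by
  refine ENNReal.le_of_forall_pos_nnreal_lt fun r hr0 hr => le_radius_of_summable_norm _ ?_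
  refine ((summable_nat_add_iff 1).mpr (summable_natCast_mul_norm_mul_pow_sub_one hr0 hr)).congr
    fun n => ?_
  simp [derivCoeff, abs_of_nonneg (Nat.cast_add_one_pos (α := ℝ) n).le, mul_assoc]

lemma hasSum_ofScalarsSum (hx : ‖x‖ₑ < (ofScalars ℝ a).radius) :
    HasSum (fun n => a n * x ^ n) (ofScalarsSum a x) := by
  have h := (ofScalars ℝ a).hasSum (by simpa using hx)
  simp only [ofScalars_apply_eq, smul_eq_mul] at h
  exact h

lemma HasSum.natCast_mul_of_derivCoeff {S : ℝ} (h : HasSum (fun n => derivCoeff a n * x ^ n) S) :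
    HasSum (fun n => n * a n * x ^ n) (x * S) := by
  refine (hasSum_nat_add_iff' 1).mp ?_
  simpa [derivCoeff, pow_succ, mul_comm, mul_left_comm, mul_assoc] using h.mul_left x

theorem hasDerivAt_ofScalarsSum (hx : ‖x‖ₑ < (ofScalars ℝ a).radius) :
    HasDerivAt (ofScalarsSum a) (ofScalarsSum (derivCoeff a) x) x := by
  obtain ⟨r, hxr, hr⟩ := ENNReal.lt_iff_exists_nnreal_btwn.mp hx
  have hxr' : |x| < r := by simpa [enorm, ← NNReal.coe_lt_coe] using hxr
  have hr0 : 0 < r := by exact_mod_cast (abs_nonneg x).trans_lt hxr'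
  have hmem : x ∈ Ioo (-(r : ℝ)) r := abs_lt.mp hxr'
  have hderiv : HasSum (fun n => a n * (n * x ^ (n - 1))) (ofScalarsSum (derivCoeff a) x) := by
    refine (hasSum_nat_add_iff' 1).mp ?_
    simpa [derivCoeff, mul_comm, mul_left_comm, mul_assoc] using
      hasSum_ofScalarsSum (hx.trans_le radius_le_radius_derivCoeff)
  rw [← hderiv.tsum_eq, ofScalarsSum_eq_tsum]
  simp only [smul_eq_mul]
  refine hasDerivAt_tsum_of_isPreconnected (summable_natCast_mul_norm_mul_pow_sub_one hr0 hr)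
    isOpen_Ioo isPreconnected_Ioo (fun n y _ => (hasDerivAt_pow n y).const_mul (a n))
    (fun n y hy => ?_) hmem (hasSum_ofScalarsSum hx).summable hmem
  rw [norm_mul, norm_mul, norm_pow, Real.norm_natCast, Real.norm_eq_abs y]
  have hyr : |y| ^ (n - 1) ≤ (r : ℝ) ^ (n - 1) :=
    pow_le_pow_left₀ (abs_nonneg y) (abs_lt.mpr hy).le _
  calc ‖a n‖ * (n * |y| ^ (n - 1)) ≤ ‖a n‖ * (n * (r : ℝ) ^ (n - 1)) := by gcongr
    _ = _ := by ring

end PowerSeries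

section Hypergeometric

variable {a b c x : ℝ}

lemma F21_eq_ofScalarsSum (a b c : ℝ) :
    F21 a b c = ofScalarsSum (ordinaryHypergeometricCoefficient a b c) := by
  funext x
  rw [F21, ofScalars_sum_eq]
  refine tsum_congr fun n => ?_
  simp only [poch, smul_eq_mul, div_eq_mul_inv, mul_inv]
  ring

lemma one_le_radius_ordinaryHypergeometricCoefficient
    (habc : ∀ kn : ℕ, (kn : ℝ) ≠ -a ∧ (kn : ℝ) ≠ -b ∧ (kn : ℝ) ≠ -c) :
    1 ≤ (ofScalars ℝ (ordinaryHypergeometricCoefficient a b c)).radius :=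
  (ordinaryHypergeometricSeries_radius_eq_one (𝔸 := ℝ) a b c habc).ge

lemma enorm_lt_radius_ordinaryHypergeometricCoefficient
    (habc : ∀ kn : ℕ, (kn : ℝ) ≠ -a ∧ (kn : ℝ) ≠ -b ∧ (kn : ℝ) ≠ -c) (hx : |x| < 1) :
    ‖x‖ₑ < (ofScalars ℝ (ordinaryHypergeometricCoefficient a b c)).radius :=
  lt_of_lt_of_le (by simpa [enorm, ← NNReal.coe_lt_coe] using hx)
    (one_le_radius_ordinaryHypergeometricCoefficient habc)

lemma derivCoeff_ordinaryHypergeometricCoefficient (hc : ∀ kn : ℕ, (kn : ℝ) ≠ -c) (n : ℕ) :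
    derivCoeff (ordinaryHypergeometricCoefficient a b c) n * (c + n)
      = (a + n) * (b + n) * ordinaryHypergeometricCoefficient a b c n := by
  have hpoch : (ascPochhammer ℝ n).eval c ≠ 0 := by
    rw [Ne, ascPochhammer_eval_eq_zero_iff]
    rintro ⟨k, -, hk⟩
    exact hc k (by linarith)
  have hcn : c + n ≠ 0 := fun h => hc n (by linarith)
  simp only [derivCoeff, ordinaryHypergeometricCoefficient, ascPochhammer_succ_eval,
    Nat.factorial_succ]
  push_cast
  field_simp

theorem F21_hypergeometric_ode
    (habc : ∀ kn : ℕ, (kn : ℝ) ≠ -a ∧ (kn : ℝ) ≠ -b ∧ (kn : ℝ) ≠ -c) (hx : |x| < 1) :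
    x * (1 - x) * deriv (deriv (F21 a b c)) x + (c - (a + b + 1) * x) * deriv (F21 a b c) x
      - a * b * F21 a b c x = 0 := by
  set t := ordinaryHypergeometricCoefficient a b c
  have hmem : ∀ y : ℝ, |y| < 1 → ‖y‖ₑ < (ofScalars ℝ t).radius := fun y hy =>
    enorm_lt_radius_ordinaryHypergeometricCoefficient habc hy
  have hx0 := hmem x hx
  have hx1 := hx0.trans_le radius_le_radius_derivCoeff
  have hx2 := hx1.trans_le radius_le_radius_derivCoeff
  have hD : deriv (ofScalarsSum t) =ᶠ[𝓝 x] ofScalarsSum (derivCoeff t) :=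
    ((isOpen_lt continuous_abs continuous_const).eventually_mem hx).mono fun y hy =>
      (hasDerivAt_ofScalarsSum (hmem y hy)).deriv
  rw [F21_eq_ofScalarsSum, hD.deriv_eq, (hasDerivAt_ofScalarsSum hx1).deriv,
    (hasDerivAt_ofScalarsSum hx0).deriv]
  set F := ofScalarsSum t x
  set F' := ofScalarsSum (derivCoeff t) x
  set F'' := ofScalarsSum (derivCoeff (derivCoeff t)) x
  have h0 : HasSum (fun n => t n * x ^ n) F := hasSum_ofScalarsSum hx0
  have h1 : HasSum (fun n => n * t n * x ^ n) (x * F') :=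
    (hasSum_ofScalarsSum hx1).natCast_mul_of_derivCoeff
  have hxF'' : HasSum (fun n => n * derivCoeff t n * x ^ n) (x * F'') :=
    (hasSum_ofScalarsSum hx2).natCast_mul_of_derivCoeff
  -- `n (n + 1) tₙ₊₁` is the `derivCoeff` of `(n - 1) tₙ`, so a second shift gives `x² F''`
  have h2 : HasSum (fun n => n * ((n - 1) * t n) * x ^ n) (x * (x * F'')) := by
    refine HasSum.natCast_mul_of_derivCoeff (hxF''.congr_fun fun n => ?_)
    simp only [derivCoeff]
    push_cast
    ring
  have hlhs : HasSum (fun n => (a + n) * (b + n) * t n * x ^ n) (x * F'' + c * F') := by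
    refine (hxF''.add ((hasSum_ofScalarsSum hx1).mul_left c)).congr_fun fun n => ?_
    rw [← derivCoeff_ordinaryHypergeometricCoefficient (fun kn => (habc kn).2.2) n]
    ring
  have hrhs : HasSum (fun n => (a + n) * (b + n) * t n * x ^ n)
      (x * (x * F'') + (a + b + 1) * (x * F') + a * b * F) := by
    refine ((h2.add (h1.mul_left (a + b + 1))).add (h0.mul_left (a * b))).congr_fun fun n => ?_
    ring
  linear_combination hlhs.unique hrhs

end Hypergeometric

section Dop

variable {f g : ℝ → ℝ} {x : ℝ}

lemma Dop_eq_iteratedDeriv (f : ℝ → ℝ) (x : ℝ) :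
    Dop f x = (1 - x) * x ^ 2 * iteratedDeriv 2 f x - x ^ 2 * iteratedDeriv 1 f x := by
  simp [Dop, iteratedDeriv_succ]

lemma Dop_sub (hf : ContDiffAt ℝ 2 f x) (hg : ContDiffAt ℝ 2 g x) :
    Dop (fun w => f w - g w) x = Dop f x - Dop g x := by
  simp only [Dop_eq_iteratedDeriv, iteratedDeriv_fun_sub hf hg,
    iteratedDeriv_fun_sub (hf.of_le one_le_two) (hg.of_le one_le_two)]
  ring

lemma Dop_const_mul (c : ℝ) (f : ℝ → ℝ) (x : ℝ) :
    Dop (fun w => c * f w) x = c * Dop f x := by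
  simp only [Dop, deriv_const_mul_field']
  ring

lemma Dop_mul_const (c : ℝ) (f : ℝ → ℝ) (x : ℝ) :
    Dop (fun w => f w * c) x = Dop f x * c := by
  simp only [Dop, deriv_mul_const_field']
  ring

lemma Dop_mul (hf : ContDiffAt ℝ 2 f x) (hg : ContDiffAt ℝ 2 g x) :
    Dop (fun w => f w * g w) x
      = Dop f x * g x + f x * Dop g x + 2 * ((1 - x) * x ^ 2) * deriv f x * deriv g x := by
  simp only [Dop_eq_iteratedDeriv, iteratedDeriv_fun_mul hf hg,
    iteratedDeriv_fun_mul (hf.of_le one_le_two) (hg.of_le one_le_two)]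
  simp only [Finset.sum_range_succ, Finset.range_one, Finset.sum_singleton,
    Nat.choose_zero_right, Nat.choose_succ_self_right, Nat.choose_self, Nat.cast_one,
    Nat.cast_ofNat, iteratedDeriv_zero, iteratedDeriv_one, one_mul, Nat.reduceAdd, tsub_zero,
    Nat.add_one_sub_one, tsub_self]
  ring

lemma Dop_rpow_const (β : ℝ) (hx : x ≠ 0) :
    Dop (fun y => y ^ β) x = β * ((β - 1) * (1 - x) - x) * x ^ β := by
  have hderiv : deriv (fun y : ℝ => y ^ β) = fun y => β * y ^ (β - 1) :=
    funext fun y => Real.deriv_rpow_const y β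
  simp only [Dop, hderiv, deriv_const_mul_field', Real.deriv_rpow_const]
  rw [Real.rpow_sub_one hx, Real.rpow_sub_one hx]
  field_simp

end Dop

section Kblock

variable {β x : ℝ}

lemma contDiffAt_F21 {a b c : ℝ} {n : WithTop ℕ∞}
    (habc : ∀ kn : ℕ, (kn : ℝ) ≠ -a ∧ (kn : ℝ) ≠ -b ∧ (kn : ℝ) ≠ -c) (hx : |x| < 1) :
    ContDiffAt ℝ n (F21 a b c) x := by
  have hR := one_le_radius_ordinaryHypergeometricCoefficient habc
  have hp := (ofScalars ℝ (ordinaryHypergeometricCoefficient a b c)).hasFPowerSeriesOnBall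
    (zero_lt_one.trans_le hR)
  rw [F21_eq_ofScalarsSum]
  exact (hp.analyticAt_of_mem (mem_eball_zero_iff.2
    (enorm_lt_radius_ordinaryHypergeometricCoefficient habc hx))).contDiffAt

lemma natCast_ne_neg_kblock_params (hβ : 0 < β) (kn : ℕ) :
    (kn : ℝ) ≠ -β ∧ (kn : ℝ) ≠ -β ∧ (kn : ℝ) ≠ -(2 * β) := by
  have := kn.cast_nonneg (α := ℝ)
  refine ⟨?_, ?_, ?_⟩ <;> intro h <;> linarith

lemma contDiffAt_kblock (hβ : 0 < β) (hx : x ∈ Ioo 0 1) : ContDiffAt ℝ 2 (kblock β) x :=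
  (Real.contDiffAt_rpow_const_of_ne hx.1.ne').mul
    (contDiffAt_F21 (natCast_ne_neg_kblock_params hβ) (abs_lt.2 ⟨by linarith [hx.1], hx.2⟩))

theorem Dop_kblock (hβ : 0 < β) (hx : x ∈ Ioo 0 1) :
    Dop (kblock β) x = β * (β - 1) * kblock β x := by
  have hx' : |x| < 1 := abs_lt.2 ⟨by linarith [hx.1], hx.2⟩
  have hode := F21_hypergeometric_ode (natCast_ne_neg_kblock_params hβ) hx'
  have hX : x ^ β = x ^ (β - 1) * x := by
    rw [← Real.rpow_add_one hx.1.ne', sub_add_cancel]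
  show Dop (fun y => y ^ β * F21 β β (2 * β) y) x = β * (β - 1) * (x ^ β * F21 β β (2 * β) x)
  rw [Dop_mul (Real.contDiffAt_rpow_const_of_ne hx.1.ne')
      (contDiffAt_F21 (natCast_ne_neg_kblock_params hβ) hx'),
    Dop_rpow_const β hx.1.ne', Real.deriv_rpow_const, Dop, hX]
  linear_combination x ^ (β - 1) * x ^ 2 * hode

end Kblock

section Casimir

variable {c w : ℝ}

lemma hasDerivAt_mul_div_sub (hw : w ≠ c) :
    HasDerivAt (fun y => y * c / (y - c)) (-c ^ 2 / (w - c) ^ 2) w := by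
  refine ((hasDerivAt_id' w).mul_const c |>.fun_div ((hasDerivAt_id' w).sub_const c)
    (sub_ne_zero.2 hw)).congr_deriv ?_
  ring

lemma deriv_deriv_mul_div_sub (hw : w ≠ c) :
    deriv (deriv fun y => y * c / (y - c)) w = 2 * c ^ 2 / (w - c) ^ 3 := by
  have hev : deriv (fun y => y * c / (y - c)) =ᶠ[𝓝 w] fun y => -c ^ 2 / (y - c) ^ 2 :=
    (isOpen_ne.eventually_mem hw).mono fun v hv => (hasDerivAt_mul_div_sub hv).deriv
  rw [hev.deriv_eq]
  refine ((hasDerivAt_const w (-c ^ 2)).fun_div ((hasDerivAt_id' w).sub_const c |>.fun_pow 2)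
    (pow_ne_zero 2 (sub_ne_zero.2 hw))).deriv.trans ?_
  field_simp
  ring

lemma contDiffAt_mul_div_sub (hw : w ≠ c) : ContDiffAt ℝ 2 (fun y => y * c / (y - c)) w := by
  fun_prop (disch := exact sub_ne_zero.2 hw)

lemma Dop_mul_div_sub (hw : w ≠ c) :
    Dop (fun y => y * c / (y - c)) w
      = (1 - w) * w ^ 2 * (2 * c ^ 2 / (w - c) ^ 3) + w ^ 2 * (c ^ 2 / (w - c) ^ 2) := by
  rw [Dop, deriv_deriv_mul_div_sub hw, (hasDerivAt_mul_div_sub hw).deriv]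
  ring

theorem Casimir2_mul_div_sub_mul {Q : ℝ → ℝ → ℝ} {z zb : ℝ}
    (hQz : ContDiffAt ℝ 2 (fun w => Q w zb) z) (hQzb : ContDiffAt ℝ 2 (fun w => Q z w) zb)
    (hne : z ≠ zb) :
    Casimir2 (fun z zb => z * zb / (z - zb) * Q z zb) z zb
      = z * zb / (z - zb) * (Dop (fun w => Q w zb) z + Dop (fun w => Q z w) zb - 2 * Q z zb) := by
  have hswap : (fun w => z * w / (z - w) * Q z w) = fun w => -1 * (w * z / (w - z)) * Q z w := by
    funext w
    rw [← neg_sub w z, div_neg]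
    ring
  have hφz := contDiffAt_mul_div_sub hne
  have hφzb : ContDiffAt ℝ 2 (fun w => -1 * (w * z / (w - z))) zb :=
    contDiffAt_const.mul (contDiffAt_mul_div_sub hne.symm)
  simp only [Casimir2]
  rw [hswap, Dop_mul hφz hQz, Dop_mul hφzb hQzb, Dop_const_mul, deriv_const_mul_field',
    deriv_fun_mul (hφz.differentiableAt two_ne_zero) (hQz.differentiableAt two_ne_zero),
    deriv_fun_mul (hφzb.differentiableAt two_ne_zero) (hQzb.differentiableAt two_ne_zero),
    deriv_const_mul_field', Dop_mul_div_sub hne, Dop_mul_div_sub hne.symm]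
  beta_reduce
  rw [(hasDerivAt_mul_div_sub hne).deriv, (hasDerivAt_mul_div_sub hne.symm).deriv]
  have h1 : z - zb ≠ 0 := sub_ne_zero.2 hne
  have h2 : zb - z ≠ 0 := sub_ne_zero.2 hne.symm
  field_simp
  ring

theorem Casimir2_eq_of_Dop_eq {f g : ℝ → ℝ} {μ ν : ℝ} {s : Set ℝ}
    (hf : ∀ x ∈ s, ContDiffAt ℝ 2 f x) (hg : ∀ x ∈ s, ContDiffAt ℝ 2 g x)
    (hDf : ∀ x ∈ s, Dop f x = μ * f x) (hDg : ∀ x ∈ s, Dop g x = ν * g x)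
    {z zb : ℝ} (hz : z ∈ s) (hzb : zb ∈ s) (hne : z ≠ zb) :
    Casimir2 (fun z zb => z * zb / (z - zb) * (f z * g zb - f zb * g z)) z zb
      = (μ + ν - 2) * (z * zb / (z - zb) * (f z * g zb - f zb * g z)) := by
  have hfz := hf z hz
  have hfzb := hf zb hzb
  have hgz := hg z hz
  have hgzb := hg zb hzb
  rw [Casimir2_mul_div_sub_mul (by fun_prop) (by fun_prop) hne,
    Dop_sub (by fun_prop) (by fun_prop), Dop_sub (by fun_prop) (by fun_prop),
    Dop_mul_const, Dop_const_mul, Dop_mul_const, Dop_const_mul,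
    hDf z hz, hDf zb hzb, hDg z hz, hDg zb hzb]
  ring

end Casimir

/-- the 4d conformal block is an eigenfunction of the quadratic
Casimir: for τ > 2, ℓ ∈ ℕ and z ≠ z̄ in (0,1), with Δ = τ + ℓ,
`C₂ G_{τ,ℓ}(z,z̄) = ½(ℓ(ℓ+2) + Δ(Δ−4))·G_{τ,ℓ}(z,z̄)`. -/
theorem casimir_eigenvalue_4d (τ : ℝ) (hτ : 2 < τ) (ℓ : ℕ) (z zb : ℝ)
    (hz : z ∈ Set.Ioo (0 : ℝ) 1) (hzb : zb ∈ Set.Ioo (0 : ℝ) 1) (hne : z ≠ zb) :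
    Casimir2 (G4block τ ℓ) z zb
      = 1 / 2 * ((ℓ : ℝ) * ((ℓ : ℝ) + 2) + (τ + (ℓ : ℝ)) * ((τ + (ℓ : ℝ)) - 4))
          * G4block τ ℓ z zb := by
  have hh : 0 < τ / 2 + (ℓ : ℝ) := by positivity
  have hhb : 0 < τ / 2 - 1 := by linarith
  have key := Casimir2_eq_of_Dop_eq (fun x hx => contDiffAt_kblock hh hx)
    (fun x hx => contDiffAt_kblock hhb hx) (fun x hx => Dop_kblock hh hx)
    (fun x hx => Dop_kblock hhb hx) hz hzb hne
  unfold G4block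
  rw [key]
  ring
end
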